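/- Let $S$ be a K3 surface with Brauer class $\alpha$, and suppose the Mukai vector $v \in H^*_{\mathrm{alg}}(S, \alpha, \mathbb{Z})$ of rank $0$ is given. Write Mukai vectors as $(r, c, s)$ with Mukai pairing $((r,c,s),(r',c',s')) = c\cdot c' - rs' - r's$. Tensoring by the $m$-th power of a line bundle with Chern class $H$ sends $(r,c,s)$ to $(r, c + rmH, s + m(c\cdot H) + \tfrac{1}{2} r m^2 H^2)$, preserving the Mukai pairing. If $\Psi$ is a Fourier–Mukai equivalence to a twisted K3 $(S', \alpha')$ sending point sheaves to objects of Mukai vector $w = (R, 0, 0)$, then $\mathrm{rank}(\Psi^{-1}_*(r,c,s)) = R\,s$. Consequently, for $H$ ample and $m \gg 0$, the composite equivalence $\Psi^{-1} \circ (L^m \otimes -)$ sends any nonzero rank-$0$ Mukai vector $v$ with $c \cdot H \neq 0$ or $s \neq 0$ appropriately to a Mukai vector of positive rank; in particular every Mukai vector of rank $0$ can be transformed by a derived equivalence into one of positive rank. -/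
import Mathlib


/-!
STATEMENT 6.  The Mukai lattice of a twisted K3 surface, modelled as `ℤ ⊕ Λ ⊕ ℤ` for a lattice
`Λ` with symmetric bilinear form `b` (the Néron–Severi-type part), with Mukai pairing
`((r,c,s),(r',c',s')) = b c c' - r s' - r' s`.  Tensoring by `L^m` (Chern class `H`, with
`b H H = 2·half` even) acts by `(r,c,s) ↦ (r, c + rmH, s + m (b c H) + r m² half)` and preserves
the pairing.  If `Ψ` is a pairing-preserving equivalence sending the point class `(0,0,1)` to
`w = (R,0,0)`, then `rank (Ψ⁻¹ u) = -(Ψ⁻¹ u, (0,0,1)) = R·s(u)`.  Consequently every rank-0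
Mukai vector `(0,c,s)` with `b c H ≠ 0` or `s > 0` is carried by the composite derived
equivalence `Ψ⁻¹ ∘ (L^m ⊗ -)` (for suitable `m`) to a Mukai vector of positive rank.
-/

/-- The Mukai pairing on `ℤ ⊕ Λ ⊕ ℤ`. -/
def mukaiPair {Λ : Type*} [AddCommGroup Λ] (b : Λ →ₗ[ℤ] Λ →ₗ[ℤ] ℤ)
    (u v : ℤ × Λ × ℤ) : ℤ :=
  b u.2.1 v.2.1 - u.1 * v.2.2 - v.1 * u.2.2

/-- The action of `L^m ⊗ (-)` on Mukai vectors, `H = c₁(L)`, `b H H = 2·half`. -/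
def lineTwist {Λ : Type*} [AddCommGroup Λ] (b : Λ →ₗ[ℤ] Λ →ₗ[ℤ] ℤ)
    (H : Λ) (half : ℤ) (m : ℤ) (u : ℤ × Λ × ℤ) : ℤ × Λ × ℤ :=
  (u.1, u.2.1 + (u.1 * m) • H, u.2.2 + m * (b u.2.1 H) + u.1 * m ^ 2 * half)

theorem stmt_6 {Λ : Type*} [AddCommGroup Λ] (b : Λ →ₗ[ℤ] Λ →ₗ[ℤ] ℤ)
    (hsymm : ∀ x y : Λ, b x y = b y x)
    (H : Λ) (half : ℤ) (heven : b H H = 2 * half) (hample : 0 < b H H)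
    -- the Fourier–Mukai equivalence `Ψ : DCoh(S,α) → DCoh(S',α')` on Mukai lattices
    (Ψ : (ℤ × Λ × ℤ) ≃ₗ[ℤ] (ℤ × Λ × ℤ))
    (hΨ : ∀ u v, mukaiPair b (Ψ u) (Ψ v) = mukaiPair b u v)
    (R : ℤ) (hR : 0 < R)
    -- `Ψ` sends point sheaves to objects of Mukai vector `w = (R,0,0)`
    (hpt : Ψ ((0 : ℤ), (0 : Λ), (1 : ℤ)) = (R, 0, 0))
    -- a rank-0 Mukai vector `v = (0, c, s)`
    (c : Λ) (s : ℤ) (hv : b c H ≠ 0 ∨ 0 < s) :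
    -- tensoring by `L^m` preserves the Mukai pairing
    (∀ (m : ℤ) (u u' : ℤ × Λ × ℤ),
        mukaiPair b (lineTwist b H half m u) (lineTwist b H half m u') = mukaiPair b u u') ∧
    -- the rank formula `rank (Ψ⁻¹ u) = -(u, (R,0,0)) = R · s(u)`
    (∀ u : ℤ × Λ × ℤ,
        -(mukaiPair b (Ψ.symm u) ((0 : ℤ), (0 : Λ), (1 : ℤ))) = R * u.2.2) ∧
    -- for suitable `m`, the composite `Ψ⁻¹ ∘ (L^m ⊗ -)` makes the rank positive
    (∃ m : ℤ,
        0 < -(mukaiPair b (Ψ.symm (lineTwist b H half m ((0 : ℤ), c, s)))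
              ((0 : ℤ), (0 : Λ), (1 : ℤ)))) := by
  have rank : ∀ u : ℤ × Λ × ℤ,
      -(mukaiPair b (Ψ.symm u) ((0 : ℤ), (0 : Λ), (1 : ℤ))) = R * u.2.2 := by
    intro u
    have h := hΨ (Ψ.symm u) ((0 : ℤ), (0 : Λ), (1 : ℤ))
    rw [Ψ.apply_symm_apply, hpt] at h
    rw [← h]
    simp [mukaiPair]
  refine ⟨?_, rank, ?_⟩
  · intro m u u'
    simp only [mukaiPair, lineTwist, map_add, map_smul, LinearMap.add_apply,
      LinearMap.smul_apply, smul_eq_mul]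
    linear_combination (u.1*m) * (hsymm H u'.2.1) + (u.1*u'.1*m^2) * heven
  · set d := b c H with hd
    rcases hv with hne | hs
    · refine ⟨(|s| + 1) * d, ?_⟩
      rw [rank]
      have : ((0 : ℤ), c, s) = ((0:ℤ), c, s) := rfl
      simp only [lineTwist]
      have habs1 : 1 ≤ |d| := Int.one_le_abs hne
      have hdd : 1 ≤ d^2 := by nlinarith [sq_abs d, abs_nonneg d]
      have hdd' : 0 < d * d := by nlinarith
      have habs : -s ≤ |s| := neg_le_abs s
      have : 0 < s + (|s| + 1) * d * d + 0 * ((|s| + 1) * d) ^ 2 * half := by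
        nlinarith [abs_nonneg s]
      calc (0:ℤ) < R * (s + (|s| + 1) * d * (b c H) + 0 * ((|s| + 1) * d) ^ 2 * half) := by
              rw [← hd]; positivity
        _ = _ := by ring
    · exact ⟨0, by rw [rank]; simp [lineTwist]; positivity⟩
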